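/- arXiv:1103.1795 — 2 statements merged into one kernel-verified Lean document; each statement's English description precedes it below -/
import Mathlib

section
/- Let β̃_n be a preliminary estimator with ||β̃_n − β_{n0}|| = O_p(√(p_n/n)), and let R̂ = n^{-1} Σ_{i=1}^n A_i^{-1/2}(β̃_n)(Y_i − π_i(β̃_n))(Y_i − π_i(β̃_n))^T A_i^{-1/2}(β̃_n) be the unstructured moment estimator of the working correlation matrix. Under conditions (A1)–(A3), if p_n^2/n → 0 as n → ∞, then ||R̂^{-1} − R_0^{-1}||_F = O_p(√(p_n/n)), where R_0 is the true common correlation matrix. -/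
/-!
At the true parameter the entries of `R̂(β₀) = n⁻¹ ∑ᵢ εᵢ(β₀) εᵢ(β₀)ᵀ` are averages of `n`
independent bounded variables with mean `R₀`, so Chebyshev's inequality gives
`R̂(β₀) - R₀ = O_p(n^{-1/2})`. On the event `‖β̃ - β₀‖ ≤ K √(p/n)`, (A1) and `p²/n → 0` move every
linear predictor by `o(1)`, so the fitted probabilities stay in `[b₁/2, (1 + b₂)/2]`; there the
standardized residuals are bounded and Lipschitz in the linear predictor, and Cauchy–Schwarz with
(A3) bounds `R̂(β̃) - R̂(β₀)` by a multiple of `‖β̃ - β₀‖`. Finally, inversion is Lipschitz near the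
invertible `R₀` and `√(p/n) → 0`, so the rate passes to `R̂⁻¹ - R₀⁻¹`.
-/

open MeasureTheory ProbabilityTheory Filter Matrix
open scoped BigOperators ENNReal NNReal Topology

noncomputable section

namespace GEE

/-- Euclidean norm of a vector in `Fin k → ℝ`. -/
def vnorm {k : ℕ} (v : Fin k → ℝ) : ℝ := Real.sqrt (∑ i, v i ^ 2)

/-- Frobenius norm of a real matrix. -/
def fnorm {a b : ℕ} (M : Matrix (Fin a) (Fin b) ℝ) : ℝ :=
  Real.sqrt (∑ i, ∑ j, M i j ^ 2)

/-- The logistic (inverse logit) function. -/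
def logistic (t : ℝ) : ℝ := Real.exp t / (1 + Real.exp t)

/-- `Z_n = O_p(a_n)` : boundedness in probability of `Z_n / a_n`. -/
def IsBigOP {Ω : ℕ → Type} [∀ n, MeasurableSpace (Ω n)]
    (P : ∀ n, Measure (Ω n)) (Z : ∀ n, Ω n → ℝ) (a : ℕ → ℝ) : Prop :=
  ∀ ε : ℝ, 0 < ε → ∃ C : ℝ, 0 < C ∧
    ∀ᶠ n in atTop, P n {ω | C * a n < |Z n ω|} ≤ ENNReal.ofReal ε

/-- `Z_n = o_p(a_n)` : `Z_n / a_n` converges to `0` in probability. -/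
def IsLittleOP {Ω : ℕ → Type} [∀ n, MeasurableSpace (Ω n)]
    (P : ∀ n, Measure (Ω n)) (Z : ∀ n, Ω n → ℝ) (a : ℕ → ℝ) : Prop :=
  ∀ ε : ℝ, 0 < ε →
    Tendsto (fun n => P n {ω | ε * a n < |Z n ω|}) atTop (𝓝 0)

/-- Convergence in distribution to the standard normal law, stated via CDFs. -/
def TendstoStdNormal {Ω : ℕ → Type} [∀ n, MeasurableSpace (Ω n)]
    (P : ∀ n, Measure (Ω n)) (Z : ∀ n, Ω n → ℝ) : Prop :=
  ∀ t : ℝ, Tendsto (fun n => (P n {ω | Z n ω ≤ t}).toReal) atTop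
    (𝓝 ((gaussianReal 0 1 (Set.Iic t)).toReal))

/-- Convergence in distribution to the `l`-dimensional standard normal law `N_l(0, I_l)`. -/
def TendstoStdNormalVec {Ω : ℕ → Type} [∀ n, MeasurableSpace (Ω n)] (l : ℕ)
    (P : ∀ n, Measure (Ω n)) (Z : ∀ n, Ω n → Fin l → ℝ) : Prop :=
  ∀ t : Fin l → ℝ, Tendsto
    (fun n => (P n {ω | ∀ j, Z n ω j ≤ t j}).toReal) atTop
    (𝓝 (((Measure.pi fun _ : Fin l => gaussianReal 0 1) {x | ∀ j, x j ≤ t j}).toReal))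

/-- The chi-squared distribution with `l` degrees of freedom, realized as the law of the
sum of squares of `l` i.i.d. standard normals. -/
def chiSq (l : ℕ) : Measure ℝ :=
  Measure.map (fun x : Fin l → ℝ => ∑ j, x j ^ 2)
    (Measure.pi fun _ : Fin l => gaussianReal 0 1)

/-- Convergence in distribution to the chi-squared law with `l` degrees of freedom. -/
def TendstoChiSq {Ω : ℕ → Type} [∀ n, MeasurableSpace (Ω n)] (l : ℕ)
    (P : ∀ n, Measure (Ω n)) (Z : ∀ n, Ω n → ℝ) : Prop :=
  ∀ t : ℝ, Tendsto (fun n => (P n {ω | Z n ω ≤ t}).toReal) atTop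
    (𝓝 ((chiSq l (Set.Iic t)).toReal))

/-- Marginal mean vector `π_i(β)` of cluster `i` under the marginal logistic model. -/
def piv {a b : ℕ} (Xi : Matrix (Fin a) (Fin b) ℝ) (β : Fin b → ℝ) : Fin a → ℝ :=
  fun j => logistic (Xi.mulVec β j)

/-- The diagonal matrix `A_i(β)^{1/2}`. -/
def Ahalf {a b : ℕ} (Xi : Matrix (Fin a) (Fin b) ℝ) (β : Fin b → ℝ) :
    Matrix (Fin a) (Fin a) ℝ :=
  Matrix.diagonal fun j => Real.sqrt (piv Xi β j * (1 - piv Xi β j))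

/-- The diagonal matrix `A_i(β)^{-1/2}`. -/
def Ainvhalf {a b : ℕ} (Xi : Matrix (Fin a) (Fin b) ℝ) (β : Fin b → ℝ) :
    Matrix (Fin a) (Fin a) ℝ :=
  Matrix.diagonal fun j => (Real.sqrt (piv Xi β j * (1 - piv Xi β j)))⁻¹

/-- Standardized residual `ε_i(β) = A_i(β)^{-1/2} (Y_i - π_i(β))`. -/
def eps {a b : ℕ} (Xi : Matrix (Fin a) (Fin b) ℝ) (β : Fin b → ℝ) (Yi : Fin a → ℝ) :
    Fin a → ℝ :=
  (Ainvhalf Xi β).mulVec (Yi - piv Xi β)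

/-- Single-cluster contribution `X_iᵀ A_i^{1/2}(β) W A_i^{-1/2}(β) (Y_i - π_i(β))` to a GEE
estimating function with working inverse-correlation matrix `W`. -/
def Scluster {a b : ℕ} (Xi : Matrix (Fin a) (Fin b) ℝ) (W : Matrix (Fin a) (Fin a) ℝ)
    (β : Fin b → ℝ) (Yi : Fin a → ℝ) : Fin b → ℝ :=
  (Xiᵀ * Ahalf Xi β * W * Ainvhalf Xi β).mulVec (Yi - piv Xi β)

/-- Single-cluster contribution `X_iᵀ A_i^{1/2}(β) W A_i^{1/2}(β) X_i` to `H̄_n(β)`. -/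
def Hcluster {a b : ℕ} (Xi : Matrix (Fin a) (Fin b) ℝ) (W : Matrix (Fin a) (Fin a) ℝ)
    (β : Fin b → ℝ) : Matrix (Fin b) (Fin b) ℝ :=
  Xiᵀ * Ahalf Xi β * W * Ahalf Xi β * Xi

/-- Single-cluster contribution `X_iᵀ A_i^{1/2}(β) W R W A_i^{1/2}(β) X_i` to `M̄_n(β)`. -/
def Mcluster {a b : ℕ} (Xi : Matrix (Fin a) (Fin b) ℝ) (W R : Matrix (Fin a) (Fin a) ℝ)
    (β : Fin b → ℝ) : Matrix (Fin b) (Fin b) ℝ :=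
  Xiᵀ * Ahalf Xi β * W * R * W * Ahalf Xi β * Xi

/-- Single-cluster contribution `X_iᵀ A_i^{1/2}(β) W ε_i(β) ε_i(β)ᵀ W A_i^{1/2}(β) X_i` to the
middle of the sandwich estimator. -/
def Mhatcluster {a b : ℕ} (Xi : Matrix (Fin a) (Fin b) ℝ) (W : Matrix (Fin a) (Fin a) ℝ)
    (β : Fin b → ℝ) (Yi : Fin a → ℝ) : Matrix (Fin b) (Fin b) ℝ :=
  Xiᵀ * Ahalf Xi β * W * vecMulVec (eps Xi β Yi) (eps Xi β Yi) * W * Ahalf Xi β * Xi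

/-- The Jacobian matrix (`∂f/∂βᵀ`) of a map `f : (Fin b → ℝ) → (Fin b → ℝ)` at `β`. -/
def jacobian {b : ℕ} (f : (Fin b → ℝ) → (Fin b → ℝ)) (β : Fin b → ℝ) :
    Matrix (Fin b) (Fin b) ℝ :=
  Matrix.of fun k l => fderiv ℝ (fun x => f x k) β (Pi.single l 1)

/-- Smallest Rayleigh quotient value over unit vectors; equals `λ_min(M)` for symmetric `M`. -/
def lmin {b : ℕ} (M : Matrix (Fin b) (Fin b) ℝ) : ℝ :=
  sInf {r | ∃ v : Fin b → ℝ, vnorm v = 1 ∧ r = v ⬝ᵥ M.mulVec v}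

/-- Largest Rayleigh quotient value over unit vectors; equals `λ_max(M)` for symmetric `M`. -/
def lmax {b : ℕ} (M : Matrix (Fin b) (Fin b) ℝ) : ℝ :=
  sSup {r | ∃ v : Fin b → ℝ, vnorm v = 1 ∧ r = v ⬝ᵥ M.mulVec v}

/-! General GEE versions (arbitrary smooth marginal mean function `μ`). -/

/-- Marginal mean vector `μ_i(β)` in the general GEE model with mean function `mu`. -/
def gpiv {a b : ℕ} (mu : ℝ → ℝ) (Xi : Matrix (Fin a) (Fin b) ℝ) (β : Fin b → ℝ) :
    Fin a → ℝ :=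
  fun j => mu (Xi.mulVec β j)

/-- `A_i(β)^{1/2}` in the general GEE model: diagonal with entries `√(μ̇(X_ijᵀ β))`. -/
def gAhalf {a b : ℕ} (mu : ℝ → ℝ) (Xi : Matrix (Fin a) (Fin b) ℝ) (β : Fin b → ℝ) :
    Matrix (Fin a) (Fin a) ℝ :=
  Matrix.diagonal fun j => Real.sqrt (deriv mu (Xi.mulVec β j))

/-- `A_i(β)^{-1/2}` in the general GEE model. -/
def gAinvhalf {a b : ℕ} (mu : ℝ → ℝ) (Xi : Matrix (Fin a) (Fin b) ℝ) (β : Fin b → ℝ) :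
    Matrix (Fin a) (Fin a) ℝ :=
  Matrix.diagonal fun j => (Real.sqrt (deriv mu (Xi.mulVec β j)))⁻¹

/-- Standardized residual in the general GEE model. -/
def geps {a b : ℕ} (mu : ℝ → ℝ) (Xi : Matrix (Fin a) (Fin b) ℝ) (β : Fin b → ℝ)
    (Yi : Fin a → ℝ) : Fin a → ℝ :=
  (gAinvhalf mu Xi β).mulVec (Yi - gpiv mu Xi β)

/-- Single-cluster contribution to the general GEE estimating function. -/
def gScluster {a b : ℕ} (mu : ℝ → ℝ) (Xi : Matrix (Fin a) (Fin b) ℝ)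
    (W : Matrix (Fin a) (Fin a) ℝ) (β : Fin b → ℝ) (Yi : Fin a → ℝ) : Fin b → ℝ :=
  (Xiᵀ * gAhalf mu Xi β * W * gAinvhalf mu Xi β).mulVec (Yi - gpiv mu Xi β)

/-- Single-cluster contribution to `H̄_n(β)` in the general GEE model. -/
def gHcluster {a b : ℕ} (mu : ℝ → ℝ) (Xi : Matrix (Fin a) (Fin b) ℝ)
    (W : Matrix (Fin a) (Fin a) ℝ) (β : Fin b → ℝ) : Matrix (Fin b) (Fin b) ℝ :=
  Xiᵀ * gAhalf mu Xi β * W * gAhalf mu Xi β * Xi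

/-- Single-cluster contribution to `M̄_n(β)` in the general GEE model. -/
def gMcluster {a b : ℕ} (mu : ℝ → ℝ) (Xi : Matrix (Fin a) (Fin b) ℝ)
    (W R : Matrix (Fin a) (Fin a) ℝ) (β : Fin b → ℝ) : Matrix (Fin b) (Fin b) ℝ :=
  Xiᵀ * gAhalf mu Xi β * W * R * W * gAhalf mu Xi β * Xi

end GEE

open GEE

namespace GEE

theorem logistic_eq_sigmoid (t : ℝ) : logistic t = Real.sigmoid t := by
  rw [logistic, Real.sigmoid_def, Real.exp_neg]
  field_simp
  ring

theorem abs_logistic_sub_logistic_le (s t : ℝ) : |logistic s - logistic t| ≤ |s - t| := by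
  have hlip : LipschitzWith 1 Real.sigmoid := by
    refine lipschitzWith_of_nnnorm_deriv_le differentiable_sigmoid fun x => ?_
    rw [Real.deriv_sigmoid, ← NNReal.coe_le_coe, coe_nnnorm, NNReal.coe_one, Real.norm_eq_abs,
      abs_of_pos (mul_pos (Real.sigmoid_pos x) (sub_pos.2 (Real.sigmoid_lt_one x)))]
    nlinarith [Real.sigmoid_pos x, Real.sigmoid_lt_one x]
  simpa [logistic_eq_sigmoid, Real.dist_eq] using hlip.dist_le_mul s t

theorem abs_sub_le_one_of_mem_Icc {y u : ℝ} (hy : y = 0 ∨ y = 1) (hu : u ∈ Set.Icc (0 : ℝ) 1) :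
    |y - u| ≤ 1 := by
  obtain ⟨hu0, hu1⟩ := hu
  rcases hy with rfl | rfl <;> rw [abs_le] <;> constructor <;> linarith

theorem abs_mul_one_sub_sub_le {u v : ℝ} (hu : u ∈ Set.Icc (0 : ℝ) 1)
    (hv : v ∈ Set.Icc (0 : ℝ) 1) : |u * (1 - u) - v * (1 - v)| ≤ |u - v| := by
  obtain ⟨hu0, hu1⟩ := hu
  obtain ⟨hv0, hv1⟩ := hv
  have h : |1 - u - v| ≤ 1 := by rw [abs_le]; constructor <;> linarith
  calc |u * (1 - u) - v * (1 - v)| = |u - v| * |1 - u - v| := by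
        rw [← abs_mul]; ring_nf
    _ ≤ |u - v| := mul_le_of_le_one_right (abs_nonneg _) h

theorem abs_inv_sqrt_sub_inv_sqrt_le {c x y : ℝ} (hc : 0 < c) (hx : c ≤ x) (hy : c ≤ y) :
    |(√x)⁻¹ - (√y)⁻¹| ≤ (√c)⁻¹ ^ 3 * |x - y| := by
  have hsc : 0 < √c := Real.sqrt_pos.2 hc
  have hsx : √c ≤ √x := Real.sqrt_le_sqrt hx
  have hsy : √c ≤ √y := Real.sqrt_le_sqrt hy
  have hx0 : 0 ≤ x := hc.le.trans hx
  have hy0 : 0 ≤ y := hc.le.trans hy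
  have hsx0 : 0 < √x := hsc.trans_le hsx
  have hsy0 : 0 < √y := hsc.trans_le hsy
  have hkey : (√x)⁻¹ - (√y)⁻¹ = (y - x) / (√x * √y * (√x + √y)) := by
    have : y - x = (√y - √x) * (√x + √y) := by
      rw [show (√y - √x) * (√x + √y) = √y ^ 2 - √x ^ 2 by ring, Real.sq_sqrt hx0,
        Real.sq_sqrt hy0]
    rw [this]
    field_simp
  have hden : √c ^ 3 ≤ √x * √y * (√x + √y) := by
    calc √c ^ 3 ≤ √c * √c * (√c + √c) := by nlinarith
      _ ≤ √x * √y * (√x + √y) := by gcongr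
  rw [hkey, abs_div, abs_of_pos (show 0 < √x * √y * (√x + √y) by positivity), abs_sub_comm,
    inv_pow, ← div_eq_inv_mul]
  exact div_le_div_of_nonneg_left (abs_nonneg _) (by positivity) hden

theorem abs_inv_sqrt_mul_le {c x : ℝ} (hc : 0 < c) (hx : c ≤ x) (r : ℝ) :
    |(√x)⁻¹ * r| ≤ (√c)⁻¹ * |r| := by
  rw [abs_mul, abs_inv, abs_of_nonneg (Real.sqrt_nonneg x)]
  exact mul_le_mul_of_nonneg_right (inv_anti₀ (Real.sqrt_pos.2 hc) (Real.sqrt_le_sqrt hx))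
    (abs_nonneg r)

theorem abs_inv_sqrt_mul_sub_le {c u v y : ℝ} (hc : 0 < c) (hcu : c ≤ u * (1 - u))
    (hcv : c ≤ v * (1 - v)) (hu : u ∈ Set.Icc (0 : ℝ) 1) (hv : v ∈ Set.Icc (0 : ℝ) 1)
    (hy : y = 0 ∨ y = 1) :
    |(√(u * (1 - u)))⁻¹ * (y - u) - (√(v * (1 - v)))⁻¹ * (y - v)|
      ≤ ((√c)⁻¹ + (√c)⁻¹ ^ 3) * |u - v| := by
  have hdecomp : (√(u * (1 - u)))⁻¹ * (y - u) - (√(v * (1 - v)))⁻¹ * (y - v)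
      = (√(u * (1 - u)))⁻¹ * (v - u) + ((√(u * (1 - u)))⁻¹ - (√(v * (1 - v)))⁻¹) * (y - v) := by
    ring
  have hinv := abs_inv_sqrt_sub_inv_sqrt_le hc hcu hcv
  rw [hdecomp]
  calc _ ≤ (√c)⁻¹ * |v - u| + (√c)⁻¹ ^ 3 * |u * (1 - u) - v * (1 - v)| * 1 := by
        refine (abs_add_le _ _).trans (add_le_add (abs_inv_sqrt_mul_le hc hcu _) ?_)
        rw [abs_mul]
        exact mul_le_mul hinv (abs_sub_le_one_of_mem_Icc hy hv) (abs_nonneg _) (by positivity)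
    _ ≤ (√c)⁻¹ * |u - v| + (√c)⁻¹ ^ 3 * |u - v| := by
        rw [mul_one, abs_sub_comm v u]
        gcongr _ + _ * ?_
        exact abs_mul_one_sub_sub_le hu hv
    _ = ((√c)⁻¹ + (√c)⁻¹ ^ 3) * |u - v| := by ring

theorem le_mul_one_sub_of_abs_sub_le {b₁ b₂ u v : ℝ} (hb₁ : 0 < b₁) (hb₂ : b₂ < 1)
    (hu : b₁ ≤ u ∧ u ≤ b₂) (hv : |v - u| ≤ min (b₁ / 2) ((1 - b₂) / 2)) :
    b₁ / 2 * ((1 - b₂) / 2) ≤ v * (1 - v) := by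
  obtain ⟨hv₁, hv₂⟩ := abs_le.1 hv
  have h₁ : b₁ / 2 ≤ v := by linarith [min_le_left (b₁ / 2) ((1 - b₂) / 2)]
  have h₂ : (1 - b₂) / 2 ≤ 1 - v := by linarith [min_le_right (b₁ / 2) ((1 - b₂) / 2)]
  exact mul_le_mul h₁ h₂ (by linarith) (by linarith)

theorem le_mul_one_sub_of_mem {b₁ b₂ u : ℝ} (hb₁ : 0 < b₁) (hb₂ : b₂ < 1)
    (hu : b₁ ≤ u ∧ u ≤ b₂) : b₁ / 2 * ((1 - b₂) / 2) ≤ u * (1 - u) :=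
  le_mul_one_sub_of_abs_sub_le hb₁ hb₂ hu
    (by rw [sub_self, abs_zero]; exact le_min (by linarith) (by linarith))

theorem piv_mem_Icc {a b : ℕ} (Xi : Matrix (Fin a) (Fin b) ℝ) (β : Fin b → ℝ) (j : Fin a) :
    piv Xi β j ∈ Set.Icc (0 : ℝ) 1 := by
  rw [piv, logistic_eq_sigmoid]
  exact ⟨Real.sigmoid_nonneg _, Real.sigmoid_le_one _⟩

theorem eps_apply {a b : ℕ} (Xi : Matrix (Fin a) (Fin b) ℝ) (β : Fin b → ℝ) (y : Fin a → ℝ)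
    (j : Fin a) :
    eps Xi β y j = (√(piv Xi β j * (1 - piv Xi β j)))⁻¹ * (y j - piv Xi β j) := by
  simp [eps, Ainvhalf, Matrix.mulVec_diagonal]

section Residuals

variable {a b : ℕ} {Xi : Matrix (Fin a) (Fin b) ℝ} {y : Fin a → ℝ} {c : ℝ} {j : Fin a}

theorem abs_eps_le (hy : y j = 0 ∨ y j = 1) (hc : 0 < c) {β : Fin b → ℝ}
    (hβ : c ≤ piv Xi β j * (1 - piv Xi β j)) : |eps Xi β y j| ≤ (√c)⁻¹ := by
  rw [eps_apply]
  exact (abs_inv_sqrt_mul_le hc hβ _).trans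
    (mul_le_of_le_one_right (by positivity) (abs_sub_le_one_of_mem_Icc hy (piv_mem_Icc ..)))

theorem abs_eps_sub_eps_le (hy : y j = 0 ∨ y j = 1) (hc : 0 < c) {β β' : Fin b → ℝ}
    (hβ : c ≤ piv Xi β j * (1 - piv Xi β j)) (hβ' : c ≤ piv Xi β' j * (1 - piv Xi β' j)) :
    |eps Xi β y j - eps Xi β' y j| ≤ ((√c)⁻¹ + (√c)⁻¹ ^ 3) * |(Xi *ᵥ (β - β')) j| := by
  rw [eps_apply, eps_apply, Matrix.mulVec_sub, Pi.sub_apply]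
  refine (abs_inv_sqrt_mul_sub_le hc hβ hβ' (piv_mem_Icc ..) (piv_mem_Icc ..) hy).trans ?_
  exact mul_le_mul_of_nonneg_left (abs_logistic_sub_logistic_le _ _) (by positivity)

end Residuals

theorem vnorm_nonneg {k : ℕ} (v : Fin k → ℝ) : 0 ≤ vnorm v := Real.sqrt_nonneg _

theorem fnorm_nonneg {a b : ℕ} (M : Matrix (Fin a) (Fin b) ℝ) : 0 ≤ fnorm M :=
  Real.sqrt_nonneg _

theorem fnorm_le_sum_abs {a b : ℕ} (M : Matrix (Fin a) (Fin b) ℝ) :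
    fnorm M ≤ ∑ i, ∑ j, |M i j| := by
  refine Real.sqrt_le_iff.2 ⟨by positivity, ?_⟩
  calc ∑ i, ∑ j, M i j ^ 2 = ∑ i, ∑ j, |M i j| ^ 2 := by simp only [sq_abs]
    _ ≤ ∑ i, (∑ j, |M i j|) ^ 2 :=
        Finset.sum_le_sum fun i _ => Finset.sum_sq_le_sq_sum_of_nonneg fun j _ => abs_nonneg _
    _ ≤ (∑ i, ∑ j, |M i j|) ^ 2 :=
        Finset.sum_sq_le_sq_sum_of_nonneg fun i _ => by positivity

theorem dotProduct_sum_transpose_mul_self_mulVec {ι : Type*} (s : Finset ι) {a b : ℕ}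
    (X : ι → Matrix (Fin a) (Fin b) ℝ) (v : Fin b → ℝ) :
    v ⬝ᵥ (∑ i ∈ s, (X i)ᵀ * X i) *ᵥ v = ∑ i ∈ s, ∑ j, (X i *ᵥ v) j ^ 2 := by
  rw [Matrix.sum_mulVec, dotProduct_sum]
  refine Finset.sum_congr rfl fun i _ => ?_
  rw [← Matrix.mulVec_mulVec, Matrix.dotProduct_mulVec, Matrix.vecMul_transpose]
  simp only [dotProduct, sq]

theorem avg_abs_mulVec_le {n a b : ℕ} (X : Fin n → Matrix (Fin a) (Fin b) ℝ) (v : Fin b → ℝ)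
    {B : ℝ} (hX : (n : ℝ)⁻¹ * (v ⬝ᵥ (∑ i, (X i)ᵀ * X i) *ᵥ v) ≤ B * ∑ k, v k ^ 2)
    (j : Fin a) : (n : ℝ)⁻¹ * ∑ i, |(X i *ᵥ v) j| ≤ √B * vnorm v := by
  rw [vnorm, ← Real.sqrt_mul' _ (by positivity)]
  refine (le_abs_self _).trans (Real.abs_le_sqrt ?_)
  have hn : ((n : ℝ)⁻¹) ^ 2 * n = (n : ℝ)⁻¹ := by
    rcases eq_or_ne (n : ℝ) 0 with h | h
    · simp [h]
    · field_simp
  calc ((n : ℝ)⁻¹ * ∑ i, |(X i *ᵥ v) j|) ^ 2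
      = (n : ℝ)⁻¹ ^ 2 * (∑ i, |(X i *ᵥ v) j|) ^ 2 := by ring
    _ ≤ (n : ℝ)⁻¹ ^ 2 * (n * ∑ i, |(X i *ᵥ v) j| ^ 2) := by
        gcongr
        simpa using sq_sum_le_card_mul_sum_sq (s := Finset.univ) (f := fun i => |(X i *ᵥ v) j|)
    _ ≤ (n : ℝ)⁻¹ * ∑ i, ∑ j', (X i *ᵥ v) j' ^ 2 := by
        rw [← mul_assoc, hn, Finset.mul_sum, Finset.mul_sum]
        gcongr with i
        rw [sq_abs]
        exact Finset.single_le_sum (f := fun j' => (X i *ᵥ v) j' ^ 2)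
          (fun _ _ => sq_nonneg _) (Finset.mem_univ j)
    _ ≤ B * ∑ k, v k ^ 2 := by rwa [← dotProduct_sum_transpose_mul_self_mulVec]

theorem abs_dotProduct_le_vnorm_mul_vnorm {k : ℕ} (v w : Fin k → ℝ) :
    |v ⬝ᵥ w| ≤ vnorm v * vnorm w := by
  rw [vnorm, vnorm, ← Real.sqrt_mul (by positivity)]
  exact Real.abs_le_sqrt (Finset.sum_mul_sq_le_sq_mul_sq _ v w)

section Frobenius

attribute [local instance] Matrix.frobeniusNormedAddCommGroup Matrix.frobeniusNormedRing
  Matrix.frobeniusNormedSpace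

theorem fnorm_eq_norm {a b : ℕ} (M : Matrix (Fin a) (Fin b) ℝ) : fnorm M = ‖M‖ := by
  simp only [fnorm, Matrix.frobenius_norm_def, Real.norm_eq_abs, sq_abs, Real.sqrt_eq_rpow,
    Real.rpow_two]

theorem exists_fnorm_inv_sub_inv_le {m : ℕ} {R : Matrix (Fin m) (Fin m) ℝ} (hR : IsUnit R.det) :
    ∃ C δ : ℝ, 0 < C ∧ 0 < δ ∧ ∀ S : Matrix (Fin m) (Fin m) ℝ, fnorm (S - R) < δ →
      fnorm (S⁻¹ - R⁻¹) ≤ C * fnorm (S - R) := by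
  set u := ((Matrix.isUnit_iff_isUnit_det R).2 hR).unit
  obtain ⟨C, hC, hCu⟩ := (NormedRing.inverse_add_norm_diff_first_order u).exists_pos
  obtain ⟨δ, hδ, hball⟩ := Metric.eventually_nhds_iff.1 hCu.bound
  refine ⟨C, δ, hC, hδ, fun S hS => ?_⟩
  have h := @hball (S - R) (by rwa [dist_zero_right, ← fnorm_eq_norm])
  simp only [u, IsUnit.unit_spec, add_sub_cancel, norm_norm, ← Ring.inverse_unit,
    ← Matrix.nonsing_inv_eq_ringInverse] at h
  simpa only [fnorm_eq_norm] using h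

theorem fnorm_sub_le_fnorm_sub_add_fnorm_sub {a b : ℕ} (A B C : Matrix (Fin a) (Fin b) ℝ) :
    fnorm (A - C) ≤ fnorm (A - B) + fnorm (B - C) := by
  simpa only [fnorm_eq_norm] using norm_sub_le_norm_sub_add_norm_sub A B C

end Frobenius

theorem abs_mul_sub_mul_le (x y x' y' : ℝ) :
    |x * y - x' * y'| ≤ |x - x'| * |y| + |x'| * |y - y'| := by
  rw [← abs_mul, ← abs_mul, show x * y - x' * y' = (x - x') * y + x' * (y - y') by ring]
  exact abs_add_le _ _

def corrEstimate {n a b : ℕ} (X : Fin n → Matrix (Fin a) (Fin b) ℝ) (Y : Fin n → Fin a → ℝ)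
    (β : Fin b → ℝ) : Matrix (Fin a) (Fin a) ℝ :=
  Matrix.of fun j j' => (n : ℝ)⁻¹ * ∑ i, eps (X i) β (Y i) j * eps (X i) β (Y i) j'

section CorrEstimate

variable {n a b : ℕ} {X : Fin n → Matrix (Fin a) (Fin b) ℝ} {Y : Fin n → Fin a → ℝ}
  {β β' : Fin b → ℝ} {c : ℝ}

theorem abs_corrEstimate_sub_apply_le (hY : ∀ i j, Y i j = 0 ∨ Y i j = 1) (hc : 0 < c)
    (hβ : ∀ i j, c ≤ piv (X i) β j * (1 - piv (X i) β j))
    (hβ' : ∀ i j, c ≤ piv (X i) β' j * (1 - piv (X i) β' j)) (j j' : Fin a) :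
    |(corrEstimate X Y β - corrEstimate X Y β') j j'|
      ≤ (√c)⁻¹ * ((√c)⁻¹ + (√c)⁻¹ ^ 3) * ((n : ℝ)⁻¹ * ∑ i, |(X i *ᵥ (β - β')) j|
        + (n : ℝ)⁻¹ * ∑ i, |(X i *ᵥ (β - β')) j'|) := by
  set κ := (√c)⁻¹
  set L := (√c)⁻¹ + (√c)⁻¹ ^ 3
  have hterm : ∀ i, |eps (X i) β (Y i) j * eps (X i) β (Y i) j'
      - eps (X i) β' (Y i) j * eps (X i) β' (Y i) j'|
      ≤ κ * L * (|(X i *ᵥ (β - β')) j| + |(X i *ᵥ (β - β')) j'|) := fun i =>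
    calc _ ≤ _ := abs_mul_sub_mul_le _ _ _ _
      _ ≤ L * |(X i *ᵥ (β - β')) j| * κ + κ * (L * |(X i *ᵥ (β - β')) j'|) := by
          gcongr
          · exact abs_eps_sub_eps_le (hY i j) hc (hβ i j) (hβ' i j)
          · exact abs_eps_le (hY i j') hc (hβ i j')
          · exact abs_eps_le (hY i j) hc (hβ' i j)
          · exact abs_eps_sub_eps_le (hY i j') hc (hβ i j') (hβ' i j')
      _ = κ * L * (|(X i *ᵥ (β - β')) j| + |(X i *ᵥ (β - β')) j'|) := by ring
  simp only [corrEstimate, Matrix.sub_apply, Matrix.of_apply, ← mul_sub,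
    ← Finset.sum_sub_distrib, abs_mul, abs_inv, Nat.abs_cast]
  calc (n : ℝ)⁻¹ * |∑ i, (eps (X i) β (Y i) j * eps (X i) β (Y i) j'
        - eps (X i) β' (Y i) j * eps (X i) β' (Y i) j')|
      ≤ (n : ℝ)⁻¹ * ∑ i, κ * L * (|(X i *ᵥ (β - β')) j| + |(X i *ᵥ (β - β')) j'|) := by
        gcongr
        exact (Finset.abs_sum_le_sum_abs _ _).trans (Finset.sum_le_sum fun i _ => hterm i)
    _ = _ := by rw [← Finset.mul_sum, Finset.sum_add_distrib]; ring

theorem fnorm_corrEstimate_sub_le (hY : ∀ i j, Y i j = 0 ∨ Y i j = 1) (hc : 0 < c)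
    (hβ : ∀ i j, c ≤ piv (X i) β j * (1 - piv (X i) β j))
    (hβ' : ∀ i j, c ≤ piv (X i) β' j * (1 - piv (X i) β' j)) {B : ℝ}
    (hX : (n : ℝ)⁻¹ * ((β - β') ⬝ᵥ (∑ i, (X i)ᵀ * X i) *ᵥ (β - β'))
      ≤ B * ∑ k, (β - β') k ^ 2) :
    fnorm (corrEstimate X Y β - corrEstimate X Y β')
      ≤ a ^ 2 * (2 * (√c)⁻¹ * ((√c)⁻¹ + (√c)⁻¹ ^ 3) * √B) * vnorm (β - β') := by
  have hentry : ∀ j j', |(corrEstimate X Y β - corrEstimate X Y β') j j'|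
      ≤ 2 * (√c)⁻¹ * ((√c)⁻¹ + (√c)⁻¹ ^ 3) * √B * vnorm (β - β') := fun j j' =>
    calc _ ≤ _ := abs_corrEstimate_sub_apply_le hY hc hβ hβ' j j'
      _ ≤ (√c)⁻¹ * ((√c)⁻¹ + (√c)⁻¹ ^ 3) * (√B * vnorm (β - β') + √B * vnorm (β - β')) := by
          gcongr _ * (?_ + ?_) <;> exact avg_abs_mulVec_le X _ hX _
      _ = _ := by ring
  calc _ ≤ _ := fnorm_le_sum_abs _
    _ ≤ ∑ _j : Fin a, ∑ _j' : Fin a, 2 * (√c)⁻¹ * ((√c)⁻¹ + (√c)⁻¹ ^ 3) * √B * vnorm (β - β') :=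
        Finset.sum_le_sum fun j _ => Finset.sum_le_sum fun j' _ => hentry j j'
    _ = _ := by simp only [Finset.sum_const, Finset.card_univ, Fintype.card_fin, nsmul_eq_mul]; ring

end CorrEstimate

section BigOP

variable {Ω : ℕ → Type} [∀ n, MeasurableSpace (Ω n)] {P : ∀ n, Measure (Ω n)}
  {Z W : ∀ n, Ω n → ℝ} {a : ℕ → ℝ}

theorem IsBigOP.mono (h : IsBigOP P Z a) (hW : ∀ n ω, |W n ω| ≤ |Z n ω|) : IsBigOP P W a := by
  intro ε hε
  obtain ⟨C, hC, hev⟩ := h ε hε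
  refine ⟨C, hC, hev.mono fun n hn => (measure_mono fun ω hω => ?_).trans hn⟩
  exact lt_of_lt_of_le hω (hW n ω)

theorem IsBigOP.mono_rate {b : ℕ → ℝ} (h : IsBigOP P Z a) (hab : ∀ n, a n ≤ b n) :
    IsBigOP P Z b := by
  intro ε hε
  obtain ⟨C, hC, hev⟩ := h ε hε
  refine ⟨C, hC, hev.mono fun n hn => (measure_mono fun ω hω => ?_).trans hn⟩
  exact lt_of_le_of_lt (mul_le_mul_of_nonneg_left (hab n) hC.le) hω

theorem IsBigOP.add {Z' : ∀ n, Ω n → ℝ} (h : IsBigOP P Z a) (h' : IsBigOP P Z' a) :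
    IsBigOP P (fun n ω => Z n ω + Z' n ω) a := by
  intro ε hε
  obtain ⟨C, hC, hev⟩ := h (ε / 2) (by positivity)
  obtain ⟨C', hC', hev'⟩ := h' (ε / 2) (by positivity)
  refine ⟨C + C', by positivity, (hev.and hev').mono fun n ⟨hn, hn'⟩ => ?_⟩
  have hsub : {ω | (C + C') * a n < |Z n ω + Z' n ω|}
      ⊆ {ω | C * a n < |Z n ω|} ∪ {ω | C' * a n < |Z' n ω|} := by
    intro ω hω
    by_contra hnot
    simp only [Set.mem_union, Set.mem_ofPred_eq, not_or, not_lt] at hω hnot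
    linarith [abs_add_le (Z n ω) (Z' n ω)]
  calc _ ≤ _ := measure_mono hsub
    _ ≤ _ := measure_union_le _ _
    _ ≤ ENNReal.ofReal (ε / 2) + ENNReal.ofReal (ε / 2) := add_le_add hn hn'
    _ = ENNReal.ofReal ε := by rw [← ENNReal.ofReal_add (by positivity) (by positivity)]; ring_nf

theorem isBigOP_zero (ha : ∀ n, 0 ≤ a n) : IsBigOP P (fun _ _ => 0) a := fun ε _ =>
  ⟨1, one_pos, Eventually.of_forall fun n => by simp [not_lt.2 (ha n)]⟩

theorem IsBigOP.sum {ι : Type*} (s : Finset ι) {Z : ι → ∀ n, Ω n → ℝ} (ha : ∀ n, 0 ≤ a n)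
    (h : ∀ k ∈ s, IsBigOP P (Z k) a) : IsBigOP P (fun n ω => ∑ k ∈ s, Z k n ω) a := by
  classical
  induction s using Finset.induction_on with
  | empty => simpa using isBigOP_zero ha
  | insert k s hk ih =>
    simp only [Finset.sum_insert hk]
    exact (h k (Finset.mem_insert_self k s)).add
      (ih fun k' hk' => h k' (Finset.mem_insert_of_mem hk'))

theorem isBigOP_fnorm_of_forall {r s : ℕ} {M : ∀ n, Ω n → Matrix (Fin r) (Fin s) ℝ}
    (ha : ∀ n, 0 ≤ a n) (h : ∀ j j', IsBigOP P (fun n ω => M n ω j j') a) :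
    IsBigOP P (fun n ω => fnorm (M n ω)) a := by
  have habs : IsBigOP P (fun n ω => ∑ j, ∑ j', |M n ω j j'|) a :=
    IsBigOP.sum _ ha fun j _ => IsBigOP.sum _ ha fun j' _ =>
      (h j j').mono fun n ω => (abs_abs _).le
  refine habs.mono fun n ω => ?_
  rw [abs_of_nonneg (fnorm_nonneg _), abs_of_nonneg (by positivity)]
  exact fnorm_le_sum_abs _

theorem IsBigOP.of_abs_le_of_abs_le (h : IsBigOP P Z a) (ha : ∀ n, 0 ≤ a n)
    (hW : ∀ K, 0 < K → ∃ C, ∀ᶠ n in atTop, ∀ ω, |Z n ω| ≤ K * a n → |W n ω| ≤ C * a n) :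
    IsBigOP P W a := by
  intro ε hε
  obtain ⟨K, hK, hev⟩ := h ε hε
  obtain ⟨C, hCev⟩ := hW K hK
  refine ⟨max C 1, by positivity, (hev.and hCev).mono fun n ⟨hn, hCn⟩ => ?_⟩
  refine (measure_mono fun ω hω => ?_).trans hn
  by_contra hnot
  have := hCn ω (not_lt.1 hnot)
  exact (not_lt.2 (this.trans (mul_le_mul_of_nonneg_right (le_max_left C 1) (ha n)))) hω

end BigOP

theorem IsBigOP.fnorm_inv_sub_inv {Ω : ℕ → Type} [∀ n, MeasurableSpace (Ω n)]
    {P : ∀ n, Measure (Ω n)} {m : ℕ} {S : ∀ n, Ω n → Matrix (Fin m) (Fin m) ℝ}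
    {R : Matrix (Fin m) (Fin m) ℝ} {a : ℕ → ℝ} (h : IsBigOP P (fun n ω => fnorm (S n ω - R)) a)
    (ha : ∀ n, 0 ≤ a n) (ha0 : Tendsto a atTop (𝓝 0)) (hR : IsUnit R.det) :
    IsBigOP P (fun n ω => fnorm ((S n ω)⁻¹ - R⁻¹)) a := by
  obtain ⟨C, δ, hC, hδ, hinv⟩ := exists_fnorm_inv_sub_inv_le hR
  refine h.of_abs_le_of_abs_le ha fun K hK => ⟨C * K, ?_⟩
  filter_upwards [ha0.eventually (gt_mem_nhds (div_pos hδ hK))] with n hn ω hω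
  rw [abs_of_nonneg (fnorm_nonneg _)] at hω ⊢
  have hsmall : fnorm (S n ω - R) < δ := hω.trans_lt (by rwa [lt_div_iff₀' hK] at hn)
  calc _ ≤ C * fnorm (S n ω - R) := hinv _ hsmall
    _ ≤ C * K * a n := by rw [mul_assoc]; exact mul_le_mul_of_nonneg_left hω hC.le

theorem meas_lt_abs_avg_sub_le {Ω : Type*} [MeasurableSpace Ω] (μ : Measure Ω)
    [IsProbabilityMeasure μ] {n : ℕ} (hn : 0 < n) {V : Fin n → Ω → ℝ}
    (hmeas : ∀ i, Measurable (V i)) (hindep : Pairwise fun i k => IndepFun (V i) (V k) μ)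
    {B m : ℝ} (hB : ∀ i ω, |V i ω| ≤ B) (hmean : ∀ i, ∫ ω, V i ω ∂μ = m) {τ : ℝ} (hτ : 0 < τ) :
    μ {ω | τ < |(n : ℝ)⁻¹ * ∑ i, V i ω - m|} ≤ ENNReal.ofReal (B ^ 2 / (n * τ ^ 2)) := by
  have hnR : (0 : ℝ) < n := Nat.cast_pos.2 hn
  have hmem : ∀ i, MemLp (V i) 2 μ := fun i =>
    MemLp.of_bound (hmeas i).aestronglyMeasurable B (Eventually.of_forall fun ω => hB i ω)
  have hsum_mean : ∫ ω, (∑ i, V i) ω ∂μ = n * m := by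
    simp only [Finset.sum_apply]
    rw [integral_finsetSum _ fun i _ => (hmem i).integrable one_le_two]
    simp [hmean]
  have hvar : variance (∑ i, V i) μ ≤ n * B ^ 2 := by
    rw [IndepFun.variance_sum (fun i _ => hmem i) fun i _ k _ hik => hindep hik]
    calc ∑ i, variance (V i) μ ≤ ∑ _i : Fin n, B ^ 2 := Finset.sum_le_sum fun i _ => by
          simpa using variance_le_sq_of_bounded (Eventually.of_forall fun ω =>
            abs_le.1 (hB i ω)) (hmeas i).aemeasurable
      _ = n * B ^ 2 := by simp
  have hsub : {ω | τ < |(n : ℝ)⁻¹ * ∑ i, V i ω - m|}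
      ⊆ {ω | n * τ ≤ |(∑ i, V i) ω - ∫ ω', (∑ i, V i) ω' ∂μ|} := by
    intro ω hω
    rw [Set.mem_ofPred_eq, hsum_mean, Finset.sum_apply]
    rw [show ∑ i, V i ω - n * m = n * ((n : ℝ)⁻¹ * ∑ i, V i ω - m) by field_simp, abs_mul,
      abs_of_pos hnR]
    exact mul_le_mul_of_nonneg_left hω.le hnR.le
  calc _ ≤ _ := measure_mono hsub
    _ ≤ ENNReal.ofReal (variance (∑ i, V i) μ / (n * τ) ^ 2) :=
        meas_ge_le_variance_div_sq (memLp_finsetSum' _ fun i _ => hmem i) (by positivity)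
    _ ≤ ENNReal.ofReal (B ^ 2 / (n * τ ^ 2)) := by
        refine ENNReal.ofReal_le_ofReal ?_
        rw [div_le_div_iff₀ (by positivity) (by positivity)]
        nlinarith [hvar, sq_nonneg τ]

theorem isBigOP_avg_sub {Ω : ℕ → Type} [∀ n, MeasurableSpace (Ω n)]
    (P : ∀ n, Measure (Ω n)) [∀ n, IsProbabilityMeasure (P n)] {V : ∀ n, Fin n → Ω n → ℝ}
    (hmeas : ∀ n i, Measurable (V n i))
    (hindep : ∀ n, Pairwise fun i k => IndepFun (V n i) (V n k) (P n))
    {B : ℝ} {m : ℕ → ℝ} (hB : ∀ n i ω, |V n i ω| ≤ B) (hmean : ∀ n i, ∫ ω, V n i ω ∂P n = m n) :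
    IsBigOP P (fun n ω => (n : ℝ)⁻¹ * ∑ i, V n i ω - m n) (fun n => √(n : ℝ)⁻¹) := by
  intro ε hε
  set C := √(B ^ 2 / ε) + 1
  have hC : 0 < C := by positivity
  have hBC : B ^ 2 / C ^ 2 ≤ ε := by
    rw [div_le_iff₀ (by positivity), ← div_le_iff₀' hε]
    nlinarith [Real.sq_sqrt (show 0 ≤ B ^ 2 / ε by positivity), Real.sqrt_nonneg (B ^ 2 / ε)]
  refine ⟨C, hC, (eventually_gt_atTop 0).mono fun n hn => ?_⟩
  have hnR : (0 : ℝ) < n := Nat.cast_pos.2 hn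
  refine (meas_lt_abs_avg_sub_le (P n) hn (hmeas n) (hindep n) (hB n) (hmean n)
    (by positivity)).trans (ENNReal.ofReal_le_ofReal ?_)
  rwa [mul_pow, Real.sq_sqrt (by positivity), ← mul_assoc, mul_comm (n : ℝ), mul_assoc,
    mul_inv_cancel₀ hnR.ne', mul_one]

theorem tendsto_sqrt_div_of_tendsto_sq_div {p : ℕ → ℕ} (hp : ∀ n, 0 < p n)
    (hrate : Tendsto (fun n => (p n : ℝ) ^ 2 / n) atTop (𝓝 0)) :
    Tendsto (fun n => √((p n : ℝ) / n)) atTop (𝓝 0) := by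
  have h : Tendsto (fun n => (p n : ℝ) / n) atTop (𝓝 0) :=
    squeeze_zero (fun n => by positivity) (fun n => div_le_div_of_nonneg_right
      (le_self_pow₀ (Nat.one_le_cast.2 (hp n)) two_ne_zero) n.cast_nonneg) hrate
  simpa using h.sqrt

section Model

variable {m : ℕ} {p : ℕ → ℕ} {Ω : ℕ → Type} [∀ n, MeasurableSpace (Ω n)]
  {P : ∀ n, Measure (Ω n)} {X : ∀ n, Fin n → Matrix (Fin m) (Fin (p n)) ℝ}
  {Y : ∀ n, Fin n → Ω n → Fin m → ℝ} {β0 : ∀ n, Fin (p n) → ℝ}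

theorem isBigOP_fnorm_corrEstimate_sub [∀ n, IsProbabilityMeasure (P n)]
    (hmeas : ∀ n i, Measurable (Y n i)) (hbin : ∀ n i ω j, Y n i ω j = 0 ∨ Y n i ω j = 1)
    (hindep : ∀ n, iIndepFun (fun i => Y n i) (P n)) {R : Matrix (Fin m) (Fin m) ℝ}
    (hcorr : ∀ n (i : Fin n) j j',
      ∫ ω, eps (X n i) (β0 n) (Y n i ω) j * eps (X n i) (β0 n) (Y n i ω) j' ∂(P n) = R j j')
    {c : ℝ} (hc : 0 < c) (hβ0 : ∀ n i j, c ≤ piv (X n i) (β0 n) j * (1 - piv (X n i) (β0 n) j)) :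
    IsBigOP P (fun n ω => fnorm (corrEstimate (X n) (fun i => Y n i ω) (β0 n) - R))
      (fun n => √(n : ℝ)⁻¹) := by
  refine isBigOP_fnorm_of_forall (fun n => Real.sqrt_nonneg _) fun j j' => ?_
  have hφ : ∀ n i, Measurable fun y => eps (X n i) (β0 n) y j * eps (X n i) (β0 n) y j' := by
    intro n i
    simp only [eps_apply]
    fun_prop
  refine isBigOP_avg_sub P (fun n i => (hφ n i).comp (hmeas n i))
    (fun n i k hik => ((hindep n).indepFun hik).comp (hφ n i) (hφ n k))
    (B := (√c)⁻¹ * (√c)⁻¹) (fun n i ω => ?_) (fun n i => hcorr n i j j')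
  rw [Function.comp_apply, abs_mul]
  exact mul_le_mul (abs_eps_le (hbin n i ω j) hc (hβ0 n i j))
    (abs_eps_le (hbin n i ω j') hc (hβ0 n i j')) (abs_nonneg _) (by positivity)

theorem isBigOP_fnorm_corrEstimate_sub_corrEstimate
    (hbin : ∀ n i ω j, Y n i ω j = 0 ∨ Y n i ω j = 1) {b₁ b₂ : ℝ} (hb₁ : 0 < b₁) (hb₂ : b₂ < 1)
    (hA1 : ∃ C : ℝ, ∀ n (i : Fin n) j, vnorm (X n i j) ≤ C * √(p n))
    (hA2 : ∀ n (i : Fin n) j, b₁ ≤ piv (X n i) (β0 n) j ∧ piv (X n i) (β0 n) j ≤ b₂) {B : ℝ}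
    (hA3 : ∀ n, 0 < n → ∀ v : Fin (p n) → ℝ,
      (n : ℝ)⁻¹ * (v ⬝ᵥ (∑ i, (X n i)ᵀ * X n i) *ᵥ v) ≤ B * ∑ k, v k ^ 2)
    {βt : ∀ n, Ω n → Fin (p n) → ℝ}
    (hβt : IsBigOP P (fun n ω => vnorm (βt n ω - β0 n)) (fun n => √(p n / n)))
    (hrate : Tendsto (fun n => (p n : ℝ) ^ 2 / n) atTop (𝓝 0)) :
    IsBigOP P (fun n ω => fnorm (corrEstimate (X n) (fun i => Y n i ω) (βt n ω)
      - corrEstimate (X n) (fun i => Y n i ω) (β0 n))) (fun n => √(p n / n)) := by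
  obtain ⟨CX, hCX⟩ := hA1
  set δ := min (b₁ / 2) ((1 - b₂) / 2)
  have hδ : 0 < δ := lt_min (by linarith) (by linarith)
  set c := b₁ / 2 * ((1 - b₂) / 2)
  have hc : 0 < c := by positivity
  refine hβt.of_abs_le_of_abs_le (fun n => Real.sqrt_nonneg _) fun K hK =>
    ⟨m ^ 2 * (2 * (√c)⁻¹ * ((√c)⁻¹ + (√c)⁻¹ ^ 3) * √B) * K, ?_⟩
  have hsmall : ∀ᶠ n in atTop, CX * K * √((p n : ℝ) ^ 2 / n) < δ := by
    refine Tendsto.eventually_lt_const hδ ?_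
    simpa using hrate.sqrt.const_mul (CX * K)
  filter_upwards [eventually_gt_atTop 0, hsmall] with n hn hsmall ω hΔ
  rw [abs_of_nonneg (vnorm_nonneg _)] at hΔ
  rw [abs_of_nonneg (fnorm_nonneg _)]
  have hpred : ∀ i j, |(X n i *ᵥ (βt n ω - β0 n)) j| ≤ δ := fun i j =>
    calc _ ≤ vnorm (X n i j) * vnorm (βt n ω - β0 n) := abs_dotProduct_le_vnorm_mul_vnorm _ _
      _ ≤ CX * √(p n) * (K * √(p n / n)) :=
          mul_le_mul (hCX n i j) hΔ (vnorm_nonneg _) ((vnorm_nonneg _).trans (hCX n i j))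
      _ = CX * K * √((p n : ℝ) ^ 2 / n) := by
          rw [mul_mul_mul_comm, ← Real.sqrt_mul (Nat.cast_nonneg _), mul_div_assoc', sq]
      _ ≤ δ := hsmall.le
  have hβt' : ∀ i j, c ≤ piv (X n i) (βt n ω) j * (1 - piv (X n i) (βt n ω) j) := fun i j =>
    le_mul_one_sub_of_abs_sub_le hb₁ hb₂ (hA2 n i j) <| (abs_logistic_sub_logistic_le _ _).trans <|
      by rw [← Pi.sub_apply, ← Matrix.mulVec_sub]; exact hpred i j
  calc _ ≤ _ := fnorm_corrEstimate_sub_le (fun i j => hbin n i ω j) hc hβt'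
        (fun i j => le_mul_one_sub_of_mem hb₁ hb₂ (hA2 n i j)) (hA3 n hn _)
    _ ≤ _ := by rw [mul_assoc _ K]; gcongr

end Model

end GEE

theorem gee_working_correlation_estimation_general
    (m : ℕ) (p : ℕ → ℕ) (hp : ∀ n, 0 < p n)
    (Ω : ℕ → Type) [∀ n, MeasurableSpace (Ω n)]
    (P : ∀ n, Measure (Ω n)) [∀ n, IsProbabilityMeasure (P n)]
    (X : ∀ n, Fin n → Matrix (Fin m) (Fin (p n)) ℝ)
    (Y : ∀ n, Fin n → Ω n → Fin m → ℝ)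
    (β0 : ∀ n, Fin (p n) → ℝ)
    (hmeas : ∀ n i, Measurable (Y n i))
    (hbin : ∀ n i ω j, Y n i ω j = 0 ∨ Y n i ω j = 1)
    (hindep : ∀ n, iIndepFun (fun i => Y n i) (P n))
    (R0 : Matrix (Fin m) (Fin m) ℝ) (hR0 : R0.PosDef)
    (hcorr : ∀ n (i : Fin n) j j',
      ∫ ω, eps (X n i) (β0 n) (Y n i ω) j * eps (X n i) (β0 n) (Y n i ω) j' ∂(P n) = R0 j j')
    (hA1 : ∃ C : ℝ, ∀ n (i : Fin n) j, vnorm (X n i j) ≤ C * Real.sqrt (p n))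
    (b1 b2 : ℝ) (hb1 : 0 < b1) (hb2 : b2 < 1)
    (hA2 : ∀ n (i : Fin n) j, b1 ≤ piv (X n i) (β0 n) j ∧ piv (X n i) (β0 n) j ≤ b2)
    (b3 b4 : ℝ)
    (hA3 : ∀ n, 0 < n → ∀ v : Fin (p n) → ℝ,
      b3 * (∑ k, v k ^ 2) ≤ (n : ℝ)⁻¹ * (v ⬝ᵥ (∑ i, (X n i)ᵀ * X n i).mulVec v) ∧
      (n : ℝ)⁻¹ * (v ⬝ᵥ (∑ i, (X n i)ᵀ * X n i).mulVec v) ≤ b4 * (∑ k, v k ^ 2))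
    (βt : ∀ n, Ω n → Fin (p n) → ℝ)
    (hβt : IsBigOP P (fun n ω => vnorm (βt n ω - β0 n)) (fun n => Real.sqrt (p n / n)))
    (hrate : Tendsto (fun n => (p n : ℝ) ^ 2 / n) atTop (𝓝 0)) :
    IsBigOP P (fun n ω => fnorm
        ((Matrix.of fun j j' : Fin m => (n : ℝ)⁻¹ *
            ∑ i, eps (X n i) (βt n ω) (Y n i ω) j * eps (X n i) (βt n ω) (Y n i ω) j')⁻¹
          - R0⁻¹))
      (fun n => Real.sqrt (p n / n)) := by
  have hc : 0 < b1 / 2 * ((1 - b2) / 2) := mul_pos (by linarith) (by linarith)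
  have hsample := (isBigOP_fnorm_corrEstimate_sub hmeas hbin hindep hcorr hc
      fun n i j => le_mul_one_sub_of_mem hb1 hb2 (hA2 n i j)).mono_rate
    (b := fun n => √(p n / n)) fun n => Real.sqrt_le_sqrt <| by
      rw [div_eq_mul_inv]; exact le_mul_of_one_le_left (by positivity) (Nat.one_le_cast.2 (hp n))
  have hplugin := isBigOP_fnorm_corrEstimate_sub_corrEstimate hbin hb1 hb2 hA1 hA2
    (fun n hn v => (hA3 n hn v).2) hβt hrate
  have hRhat : IsBigOP P (fun n ω =>
      fnorm (corrEstimate (X n) (fun i => Y n i ω) (βt n ω) - R0)) (fun n => √(p n / n)) :=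
    (hplugin.add hsample).mono fun n ω => by
      rw [abs_of_nonneg (fnorm_nonneg _),
        abs_of_nonneg (add_nonneg (fnorm_nonneg _) (fnorm_nonneg _))]
      exact fnorm_sub_le_fnorm_sub_add_fnorm_sub _ _ _
  exact hRhat.fnorm_inv_sub_inv (fun n => Real.sqrt_nonneg _)
    (tendsto_sqrt_div_of_tendsto_sq_div hp hrate) (isUnit_iff_ne_zero.2 hR0.det_pos.ne')

/-- the unstructured moment estimator of the working correlation matrix
satisfies ‖R̂⁻¹ − R₀⁻¹‖_F = O_p(√(p_n/n)). -/
theorem gee_working_correlation_estimation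
    (m : ℕ) (hm : 0 < m) (p : ℕ → ℕ) (hp : ∀ n, 0 < p n)
    (Ω : ℕ → Type) [∀ n, MeasurableSpace (Ω n)]
    (P : ∀ n, Measure (Ω n)) [∀ n, IsProbabilityMeasure (P n)]
    (X : ∀ n, Fin n → Matrix (Fin m) (Fin (p n)) ℝ)
    (Y : ∀ n, Fin n → Ω n → Fin m → ℝ)
    (β0 : ∀ n, Fin (p n) → ℝ)
    (hmeas : ∀ n i, Measurable (Y n i))
    (hbin : ∀ n i ω j, Y n i ω j = 0 ∨ Y n i ω j = 1)
    (hindep : ∀ n, iIndepFun (fun i => Y n i) (P n))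
    (hmean : ∀ n (i : Fin n) j, ∫ ω, Y n i ω j ∂(P n) = piv (X n i) (β0 n) j)
    (R0 : Matrix (Fin m) (Fin m) ℝ) (hR0 : R0.PosDef)
    (hcorr : ∀ n (i : Fin n) j j',
      ∫ ω, eps (X n i) (β0 n) (Y n i ω) j * eps (X n i) (β0 n) (Y n i ω) j' ∂(P n) = R0 j j')
    (hA1 : ∃ C : ℝ, ∀ n (i : Fin n) j, vnorm (X n i j) ≤ C * Real.sqrt (p n))
    (b1 b2 : ℝ) (hb1 : 0 < b1) (hb2 : b2 < 1)
    (hA2 : ∀ n (i : Fin n) j, b1 ≤ piv (X n i) (β0 n) j ∧ piv (X n i) (β0 n) j ≤ b2)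
    (hA2c : ∀ n, ∃ B : Set (Fin (p n) → ℝ), IsCompact B ∧ β0 n ∈ interior B)
    (b3 b4 : ℝ) (hb3 : 0 < b3)
    (hA3 : ∀ n, 0 < n → ∀ v : Fin (p n) → ℝ,
      b3 * (∑ k, v k ^ 2) ≤ (n : ℝ)⁻¹ * (v ⬝ᵥ (∑ i, (X n i)ᵀ * X n i).mulVec v) ∧
      (n : ℝ)⁻¹ * (v ⬝ᵥ (∑ i, (X n i)ᵀ * X n i).mulVec v) ≤ b4 * (∑ k, v k ^ 2))
    (βt : ∀ n, Ω n → Fin (p n) → ℝ)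
    (hβt : IsBigOP P (fun n ω => vnorm (βt n ω - β0 n)) (fun n => Real.sqrt (p n / n)))
    (hrate : Tendsto (fun n => (p n : ℝ) ^ 2 / n) atTop (𝓝 0)) :
    IsBigOP P (fun n ω => fnorm
        ((Matrix.of fun j j' : Fin m => (n : ℝ)⁻¹ *
            ∑ i, eps (X n i) (βt n ω) (Y n i ω) j * eps (X n i) (βt n ω) (Y n i ω) j')⁻¹
          - R0⁻¹))
      (fun n => Real.sqrt (p n / n)) :=
  gee_working_correlation_estimation_general m p hp Ω P X Y β0 hmeas hbin hindep R0 hR0 hcorr hA1 b1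
    b2 hb1 hb2 hA2 b3 b4 hA3 βt hβt hrate
end
end

section
/- Under conditions (A1)–(A4), E[||S̄_n(β_{n0})||²] ≤ C · Tr(Σ_{i=1}^n X_i X_i^T) = O(n p_n) for a constant C depending only on the bounds in (A2) and (A4); consequently ||S̄_n(β_{n0})|| = O_p(√(n p_n)). -/
open MeasureTheory ProbabilityTheory Filter Matrix
open scoped BigOperators ENNReal NNReal Topology

noncomputable section

open GEE

/-!
Each cluster term `S_i = X_iᵀ A_i^{1/2} W A_i^{-1/2} (Y_i - π_i)` is a fixed linear image of the
residual `Y_i - π_i`, whose entries lie in `[-1, 1]`. By (A2) the entries of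
`A_i^{1/2} W A_i^{-1/2} (Y_i - π_i)` are at most `(b₁ (1 - b₂))^{-1/2}` times the absolute row
sums of `W`, so Cauchy–Schwarz gives `‖S_i‖² ≤ K tr(X_i X_iᵀ)` pointwise. The `S_i` are
independent with mean zero, so the cross terms of `E‖∑ S_i‖²` vanish and
`E‖∑ S_i‖² = ∑ E‖S_i‖² ≤ K tr(∑ X_i X_iᵀ)`; by (A1) this trace is at most `m C² n p_n`, and
Chebyshev's inequality turns the second-moment bound into `‖S̄_n(β₀)‖ = O_p(√(n p_n))`.
-/

namespace Matrix

lemma trace_mul_transpose_self {a b : Type*} [Fintype a] [Fintype b]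
    (A : Matrix a b ℝ) : (A * Aᵀ).trace = ∑ j, ∑ k, A j k ^ 2 := by
  simp [trace, mul_apply, sq]

lemma sum_sq_transpose_mulVec_le {a b : Type*} [Fintype a] [Fintype b]
    (A : Matrix a b ℝ) (u : a → ℝ) :
    ∑ k, (Aᵀ *ᵥ u) k ^ 2 ≤ (A * Aᵀ).trace * ∑ j, u j ^ 2 := by
  calc ∑ k, (Aᵀ *ᵥ u) k ^ 2 = ∑ k, (∑ j, A j k * u j) ^ 2 := by
        simp [mulVec, dotProduct]
    _ ≤ ∑ k, (∑ j, A j k ^ 2) * ∑ j, u j ^ 2 :=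
        Finset.sum_le_sum fun k _ => Finset.sum_mul_sq_le_sq_mul_sq _ _ _
    _ = (A * Aᵀ).trace * ∑ j, u j ^ 2 := by
        rw [← Finset.sum_mul, trace_mul_transpose_self, Finset.sum_comm]

lemma abs_diagonal_mul_mul_diagonal_mulVec_le {a : Type*} [Fintype a] [DecidableEq a]
    (d e z : a → ℝ) (W : Matrix a a ℝ) {c : ℝ} (hd : ∀ j, |d j| ≤ 1) (he : ∀ j, |e j| ≤ c)
    (hz : ∀ j, |z j| ≤ 1) (j : a) :
    |((diagonal d * W * diagonal e) *ᵥ z) j| ≤ c * ∑ j', |W j j'| := by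
  simp only [mulVec, dotProduct, mul_diagonal, diagonal_mul, Finset.mul_sum]
  refine (Finset.abs_sum_le_sum_abs _ _).trans (Finset.sum_le_sum fun j' _ => ?_)
  have hc : 0 ≤ c := (abs_nonneg _).trans (he j')
  rw [abs_mul, abs_mul, abs_mul]
  calc |d j| * |W j j'| * |e j'| * |z j'| ≤ 1 * |W j j'| * c * 1 := by
        gcongr
        exacts [hd j, he j', hz j']
    _ = c * |W j j'| := by ring

end Matrix

namespace GEE

lemma vnorm_sq {k : ℕ} (v : Fin k → ℝ) : vnorm v ^ 2 = ∑ i, v i ^ 2 :=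
  Real.sq_sqrt (by positivity)

end GEE

section Moments

variable {Ω : Type*} [MeasurableSpace Ω] {μ : Measure Ω}

lemma integral_sq_sum_of_pairwise_indepFun [IsFiniteMeasure μ] {ι : Type*} {s : Finset ι}
    {Z : ι → Ω → ℝ} (hZ : ∀ i ∈ s, MemLp (Z i) 2 μ) (hZ0 : ∀ i ∈ s, ∫ ω, Z i ω ∂μ = 0)
    (hind : Set.Pairwise ↑s fun i j => IndepFun (Z i) (Z j) μ) :
    ∫ ω, (∑ i ∈ s, Z i ω) ^ 2 ∂μ = ∑ i ∈ s, ∫ ω, Z i ω ^ 2 ∂μ := by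
  have hsum0 : ∫ ω, (∑ i ∈ s, Z i) ω ∂μ = 0 := by
    simp only [Finset.sum_apply]
    rw [integral_finsetSum s fun i hi => (hZ i hi).integrable one_le_two]
    exact Finset.sum_eq_zero hZ0
  have hvar := IndepFun.variance_sum hZ hind
  rw [variance_of_integral_eq_zero (memLp_finsetSum' s hZ).aemeasurable hsum0] at hvar
  simp only [Finset.sum_apply] at hvar
  rw [hvar]
  refine Finset.sum_congr rfl fun i hi => variance_of_integral_eq_zero ?_ (hZ0 i hi)
  exact (hZ i hi).aemeasurable

lemma integrable_vnorm_sq_sum [IsFiniteMeasure μ] {ι : Type*} [Fintype ι] {p : ℕ}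
    {S : ι → Ω → Fin p → ℝ} (hS : ∀ i k, MemLp (fun ω => S i ω k) 2 μ) :
    Integrable (fun ω => vnorm (∑ i, S i ω) ^ 2) μ := by
  simp only [vnorm_sq, Finset.sum_apply]
  exact integrable_finsetSum _ fun k _ =>
    (memLp_finsetSum _ fun i _ => hS i k).integrable_sq

lemma integral_vnorm_sq_sum_of_iIndepFun [IsFiniteMeasure μ] {ι : Type*} [Fintype ι] {p : ℕ}
    {S : ι → Ω → Fin p → ℝ} (hS : ∀ i k, MemLp (fun ω => S i ω k) 2 μ)
    (hS0 : ∀ i k, ∫ ω, S i ω k ∂μ = 0) (hind : iIndepFun S μ) :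
    ∫ ω, vnorm (∑ i, S i ω) ^ 2 ∂μ = ∑ i, ∫ ω, vnorm (S i ω) ^ 2 ∂μ := by
  have hcoord : ∀ k, Set.Pairwise ↑(Finset.univ : Finset ι)
      fun i j => IndepFun (fun ω => S i ω k) (fun ω => S j ω k) μ :=
    fun k i _ j _ hij =>
      (hind.indepFun hij).comp (measurable_pi_apply k) (measurable_pi_apply k)
  simp only [vnorm_sq, Finset.sum_apply]
  rw [integral_finsetSum _ fun k _ => (memLp_finsetSum _ fun i _ => hS i k).integrable_sq]
  simp only [fun k => integral_sq_sum_of_pairwise_indepFun (fun i _ => hS i k)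
    (fun i _ => hS0 i k) (hcoord k)]
  rw [Finset.sum_comm]
  exact Finset.sum_congr rfl fun i _ =>
    (integral_finsetSum _ fun k _ => (hS i k).integrable_sq).symm

lemma measure_mul_lt_abs_le_of_integral_sq_le [IsFiniteMeasure μ] {Z : Ω → ℝ} {a C K : ℝ}
    (hint : Integrable (fun ω => Z ω ^ 2) μ) (ha : 0 ≤ a) (hC : 0 < C)
    (hK : ∫ ω, Z ω ^ 2 ∂μ ≤ K * a ^ 2) :
    μ {ω | C * a < |Z ω|} ≤ ENNReal.ofReal (K / C ^ 2) := by
  rcases ha.eq_or_lt with rfl | ha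
  · have hZ : (fun ω => Z ω ^ 2) =ᵐ[μ] 0 :=
      (integral_eq_zero_iff_of_nonneg (fun ω => sq_nonneg _) hint).mp
        (le_antisymm (by simpa using hK) (integral_nonneg fun ω => sq_nonneg _))
    refine (measure_mono_null (fun ω hω => ?_) (ae_iff.mp hZ)).trans_le bot_le
    simp_all
  · have hsub : {ω | C * a < |Z ω|} ⊆ {ω | (C * a) ^ 2 ≤ Z ω ^ 2} :=
      fun ω (hω : C * a < |Z ω|) =>
        show (C * a) ^ 2 ≤ Z ω ^ 2 from sq_abs (Z ω) ▸ pow_le_pow_left₀ (by positivity) hω.le 2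
    have hmarkov := mul_meas_ge_le_integral_of_nonneg (ae_of_all _ fun ω => sq_nonneg (Z ω))
      hint ((C * a) ^ 2)
    have hreal : μ.real {ω | (C * a) ^ 2 ≤ Z ω ^ 2} ≤ K / C ^ 2 := by
      rw [le_div_iff₀ (by positivity)]
      refine le_of_mul_le_mul_right ?_ (pow_pos ha 2)
      linarith [show (C * a) ^ 2 = C ^ 2 * a ^ 2 by ring]
    calc μ {ω | C * a < |Z ω|} ≤ μ {ω | (C * a) ^ 2 ≤ Z ω ^ 2} := measure_mono hsub
      _ = ENNReal.ofReal (μ.real {ω | (C * a) ^ 2 ≤ Z ω ^ 2}) := (ofReal_measureReal).symm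
      _ ≤ ENNReal.ofReal (K / C ^ 2) := ENNReal.ofReal_le_ofReal hreal

end Moments

lemma isBigOP_of_integral_sq_le {Ω : ℕ → Type} [∀ n, MeasurableSpace (Ω n)]
    {P : ∀ n, Measure (Ω n)} [∀ n, IsFiniteMeasure (P n)] {Z : ∀ n, Ω n → ℝ} {a : ℕ → ℝ}
    {K : ℝ} (hK : 0 ≤ K) (ha : ∀ n, 0 ≤ a n) (hint : ∀ n, Integrable (fun ω => Z n ω ^ 2) (P n))
    (hZ : ∀ n, ∫ ω, Z n ω ^ 2 ∂P n ≤ K * a n ^ 2) : IsBigOP P Z a := by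
  intro ε hε
  refine ⟨K / ε + 1, by positivity, Eventually.of_forall fun n => ?_⟩
  refine (measure_mul_lt_abs_le_of_integral_sq_le (hint n) (ha n) (by positivity) (hZ n)).trans
    (ENNReal.ofReal_le_ofReal ?_)
  have h1 : 1 ≤ K / ε + 1 := by linarith [div_nonneg hK hε.le]
  rw [div_le_iff₀ (by positivity)]
  calc K ≤ ε * (K / ε + 1) := by rw [mul_add, mul_div_cancel₀ _ hε.ne']; linarith
    _ ≤ ε * (K / ε + 1) ^ 2 := by gcongr; exact le_self_pow₀ h1 two_ne_zero

namespace GEE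

variable {Ω : Type*} [MeasurableSpace Ω] {μ : Measure Ω}

lemma logistic_pos (t : ℝ) : 0 < logistic t :=
  div_pos (Real.exp_pos t) (by positivity)

lemma logistic_lt_one (t : ℝ) : logistic t < 1 := by
  rw [logistic, div_lt_one (by positivity)]
  linarith

lemma sqrt_logistic_mul_one_sub_le_one (t : ℝ) : √(logistic t * (1 - logistic t)) ≤ 1 :=
  Real.sqrt_le_one.mpr (by nlinarith [logistic_pos t, logistic_lt_one t])

lemma inv_sqrt_mul_one_sub_le {x b1 b2 : ℝ} (hb1 : 0 < b1) (hb2 : b2 < 1) (h1 : b1 ≤ x)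
    (h2 : x ≤ b2) : (√(x * (1 - x)))⁻¹ ≤ (√(b1 * (1 - b2)))⁻¹ :=
  inv_anti₀ (Real.sqrt_pos.mpr (mul_pos hb1 (by linarith)))
    (Real.sqrt_le_sqrt (mul_le_mul h1 (by linarith) (by linarith) (by linarith)))

lemma abs_sub_logistic_le_one {y : ℝ} (hy : y = 0 ∨ y = 1) (t : ℝ) : |y - logistic t| ≤ 1 := by
  have := logistic_pos t
  have := logistic_lt_one t
  rcases hy with rfl | rfl <;> rw [abs_le] <;> constructor <;> linarith

lemma Scluster_eq_transpose_mulVec {a b : ℕ} (Xi : Matrix (Fin a) (Fin b) ℝ)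
    (W : Matrix (Fin a) (Fin a) ℝ) (β : Fin b → ℝ) (Yi : Fin a → ℝ) :
    Scluster Xi W β Yi = Xiᵀ *ᵥ ((Ahalf Xi β * W * Ainvhalf Xi β) *ᵥ (Yi - piv Xi β)) := by
  rw [Scluster, Matrix.mulVec_mulVec]
  simp only [Matrix.mul_assoc]

lemma sum_sq_Scluster_le {a b : ℕ} (Xi : Matrix (Fin a) (Fin b) ℝ)
    (W : Matrix (Fin a) (Fin a) ℝ) (β : Fin b → ℝ) (Yi : Fin a → ℝ) {b1 b2 : ℝ}
    (hb1 : 0 < b1) (hb2 : b2 < 1) (hY : ∀ j, Yi j = 0 ∨ Yi j = 1)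
    (hpi : ∀ j, b1 ≤ piv Xi β j ∧ piv Xi β j ≤ b2) :
    ∑ k, Scluster Xi W β Yi k ^ 2 ≤
      (Xi * Xiᵀ).trace * ∑ j, ((√(b1 * (1 - b2)))⁻¹ * ∑ j', |W j j'|) ^ 2 := by
  set u := (Ahalf Xi β * W * Ainvhalf Xi β) *ᵥ (Yi - piv Xi β)
  have hu : ∀ j, |u j| ≤ (√(b1 * (1 - b2)))⁻¹ * ∑ j', |W j j'| :=
    abs_diagonal_mul_mul_diagonal_mulVec_le _ _ _ W
      (fun j => by
        rw [abs_of_nonneg (Real.sqrt_nonneg _)]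
        exact sqrt_logistic_mul_one_sub_le_one _)
      (fun j => by
        rw [abs_of_nonneg (inv_nonneg.mpr (Real.sqrt_nonneg _))]
        exact inv_sqrt_mul_one_sub_le hb1 hb2 (hpi j).1 (hpi j).2)
      (fun j => abs_sub_logistic_le_one (hY j) _)
  have htr : 0 ≤ (Xi * Xiᵀ).trace := by
    rw [trace_mul_transpose_self]
    positivity
  rw [Scluster_eq_transpose_mulVec]
  refine (sum_sq_transpose_mulVec_le Xi u).trans (mul_le_mul_of_nonneg_left ?_ htr)
  exact Finset.sum_le_sum fun j _ => sq_le_sq' (abs_le.mp (hu j)).1 (abs_le.mp (hu j)).2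

lemma trace_mul_transpose_le {a b : ℕ} (Xi : Matrix (Fin a) (Fin b) ℝ) {c : ℝ}
    (hX : ∀ j, vnorm (Xi j) ≤ c) : (Xi * Xiᵀ).trace ≤ a * c ^ 2 := by
  calc (Xi * Xiᵀ).trace = ∑ j, vnorm (Xi j) ^ 2 := by
        simp only [trace_mul_transpose_self, vnorm_sq]
    _ ≤ ∑ _j : Fin a, c ^ 2 :=
        Finset.sum_le_sum fun j _ => pow_le_pow_left₀ (Real.sqrt_nonneg _) (hX j) 2
    _ = a * c ^ 2 := by simp

lemma measurable_Scluster {a b : ℕ} (Xi : Matrix (Fin a) (Fin b) ℝ)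
    (W : Matrix (Fin a) (Fin a) ℝ) (β : Fin b → ℝ) : Measurable (Scluster Xi W β) :=
  (continuous_const.matrix_mulVec (continuous_id.sub continuous_const)).measurable

lemma integral_Scluster_apply_eq_zero [IsProbabilityMeasure μ] {a b : ℕ}
    (Xi : Matrix (Fin a) (Fin b) ℝ) (W : Matrix (Fin a) (Fin a) ℝ) (β : Fin b → ℝ)
    {Yi : Ω → Fin a → ℝ} (hint : ∀ j, Integrable (fun ω => Yi ω j) μ)
    (hmean : ∀ j, ∫ ω, Yi ω j ∂μ = piv Xi β j) (k : Fin b) :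
    ∫ ω, Scluster Xi W β (Yi ω) k ∂μ = 0 := by
  simp only [Scluster, Matrix.mulVec, dotProduct, Pi.sub_apply]
  rw [integral_finsetSum (f := fun j ω => (Xiᵀ * Ahalf Xi β * W * Ainvhalf Xi β) k j *
    (Yi ω j - piv Xi β j)) _ fun j _ => ((hint j).sub (integrable_const _)).const_mul _]
  refine Finset.sum_eq_zero fun j _ => ?_
  rw [integral_const_mul, integral_sub (hint j) (integrable_const _), hmean j]
  simp

lemma memLp_Scluster_apply [IsFiniteMeasure μ] {a b : ℕ} (Xi : Matrix (Fin a) (Fin b) ℝ)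
    (W : Matrix (Fin a) (Fin a) ℝ) (β : Fin b → ℝ) {Yi : Ω → Fin a → ℝ} (hY : Measurable Yi)
    (hbin : ∀ ω j, Yi ω j = 0 ∨ Yi ω j = 1) {b1 b2 : ℝ} (hb1 : 0 < b1) (hb2 : b2 < 1)
    (hpi : ∀ j, b1 ≤ piv Xi β j ∧ piv Xi β j ≤ b2) (k : Fin b) :
    MemLp (fun ω => Scluster Xi W β (Yi ω) k) 2 μ := by
  refine .of_bound (Measurable.aestronglyMeasurable
    ((measurable_pi_apply k).comp ((measurable_Scluster Xi W β).comp hY)))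
    √((Xi * Xiᵀ).trace * ∑ j, ((√(b1 * (1 - b2)))⁻¹ * ∑ j', |W j j'|) ^ 2)
    (ae_of_all _ fun ω => Real.abs_le_sqrt
      ((Finset.single_le_sum (fun k _ => sq_nonneg _) (Finset.mem_univ k)).trans
        (sum_sq_Scluster_le Xi W β (Yi ω) hb1 hb2 (hbin ω) hpi)))

lemma trace_sum_mul_transpose_le {n a b : ℕ} (X : Fin n → Matrix (Fin a) (Fin b) ℝ) {c : ℝ}
    (hX : ∀ i j, vnorm (X i j) ≤ c) : (∑ i, X i * (X i)ᵀ).trace ≤ n * (a * c ^ 2) := by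
  rw [Matrix.trace_sum]
  simpa using Finset.sum_le_sum fun i (_ : i ∈ Finset.univ) =>
    trace_mul_transpose_le (X i) (hX i)

lemma integral_vnorm_sq_sum_Scluster_le [IsProbabilityMeasure μ] {n a b : ℕ}
    (X : Fin n → Matrix (Fin a) (Fin b) ℝ) (W : Matrix (Fin a) (Fin a) ℝ) (β : Fin b → ℝ)
    {Y : Fin n → Ω → Fin a → ℝ} (hmeas : ∀ i, Measurable (Y i))
    (hbin : ∀ i ω j, Y i ω j = 0 ∨ Y i ω j = 1) (hindep : iIndepFun Y μ)
    (hmean : ∀ i j, ∫ ω, Y i ω j ∂μ = piv (X i) β j) {b1 b2 : ℝ} (hb1 : 0 < b1)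
    (hb2 : b2 < 1) (hpi : ∀ i j, b1 ≤ piv (X i) β j ∧ piv (X i) β j ≤ b2) :
    ∫ ω, vnorm (∑ i, Scluster (X i) W β (Y i ω)) ^ 2 ∂μ ≤
      (∑ i, X i * (X i)ᵀ).trace * ∑ j, ((√(b1 * (1 - b2)))⁻¹ * ∑ j', |W j j'|) ^ 2 := by
  have hint : ∀ i j, Integrable (fun ω => Y i ω j) μ := fun i j =>
    .of_bound ((measurable_pi_apply j).comp (hmeas i)).aestronglyMeasurable 1
      (ae_of_all _ fun ω => by rcases hbin i ω j with h | h <;> simp [h])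
  rw [integral_vnorm_sq_sum_of_iIndepFun
    (fun i => memLp_Scluster_apply (X i) W β (hmeas i) (hbin i) hb1 hb2 (hpi i))
    (fun i => integral_Scluster_apply_eq_zero (X i) W β (hint i) (hmean i))
    (hindep.comp _ fun i => measurable_Scluster (X i) W β),
    Matrix.trace_sum, Finset.sum_mul]
  refine Finset.sum_le_sum fun i _ => ?_
  calc ∫ ω, vnorm (Scluster (X i) W β (Y i ω)) ^ 2 ∂μ
      ≤ ∫ _ω, (X i * (X i)ᵀ).trace * ∑ j, ((√(b1 * (1 - b2)))⁻¹ * ∑ j', |W j j'|) ^ 2 ∂μ :=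
        integral_mono_of_nonneg (ae_of_all _ fun ω => by positivity) (integrable_const _)
          (ae_of_all _ fun ω => (vnorm_sq _).trans_le
            (sum_sq_Scluster_le (X i) W β (Y i ω) hb1 hb2 (hbin i ω) (hpi i)))
    _ = _ := by simp

end GEE

theorem gee_Sbar_second_moment_general
    (m : ℕ) (p : ℕ → ℕ)
    (Ω : ℕ → Type) [∀ n, MeasurableSpace (Ω n)]
    (P : ∀ n, Measure (Ω n)) [∀ n, IsProbabilityMeasure (P n)]
    (X : ∀ n, Fin n → Matrix (Fin m) (Fin (p n)) ℝ)
    (Y : ∀ n, Fin n → Ω n → Fin m → ℝ)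
    (β0 : ∀ n, Fin (p n) → ℝ)
    (hmeas : ∀ n i, Measurable (Y n i))
    (hbin : ∀ n i ω j, Y n i ω j = 0 ∨ Y n i ω j = 1)
    (hindep : ∀ n, iIndepFun (fun i => Y n i) (P n))
    (hmean : ∀ n (i : Fin n) j, ∫ ω, Y n i ω j ∂(P n) = piv (X n i) (β0 n) j)
    (hA1 : ∃ C : ℝ, ∀ n (i : Fin n) j, vnorm (X n i j) ≤ C * Real.sqrt (p n))
    (b1 b2 : ℝ) (hb1 : 0 < b1) (hb2 : b2 < 1)
    (hA2 : ∀ n (i : Fin n) j, b1 ≤ piv (X n i) (β0 n) j ∧ piv (X n i) (β0 n) j ≤ b2)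
    (Rbar : Matrix (Fin m) (Fin m) ℝ) :
    (∃ C : ℝ, 0 < C ∧ ∀ n,
        ∫ ω, vnorm (∑ i, Scluster (X n i) Rbar⁻¹ (β0 n) (Y n i ω)) ^ 2 ∂(P n) ≤
          C * (∑ i, X n i * (X n i)ᵀ).trace) ∧
    (∃ C' : ℝ, 0 < C' ∧ ∀ n,
        (∑ i : Fin n, X n i * (X n i)ᵀ).trace ≤ C' * (n * p n)) ∧
    IsBigOP P (fun n ω => vnorm (∑ i, Scluster (X n i) Rbar⁻¹ (β0 n) (Y n i ω)))
      (fun n => Real.sqrt ((n : ℝ) * p n)) := by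
  obtain ⟨C0, hC0⟩ := hA1
  set K := ∑ j, ((√(b1 * (1 - b2)))⁻¹ * ∑ j', |Rbar⁻¹ j j'|) ^ 2
  have hK : 0 ≤ K := Finset.sum_nonneg fun j _ => sq_nonneg _
  have htrace_nonneg : ∀ n, 0 ≤ (∑ i : Fin n, X n i * (X n i)ᵀ).trace := fun n => by
    simp only [Matrix.trace_sum, trace_mul_transpose_self]
    positivity
  have htrace : ∀ n, (∑ i : Fin n, X n i * (X n i)ᵀ).trace ≤ (m * C0 ^ 2 + 1) * (n * p n) := by
    intro n
    have h := trace_sum_mul_transpose_le (X n) (hC0 n)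
    rw [mul_pow, Real.sq_sqrt (Nat.cast_nonneg _)] at h
    have hnp : (0 : ℝ) ≤ n * p n := by positivity
    nlinarith
  have hmoment : ∀ n, ∫ ω, vnorm (∑ i, Scluster (X n i) Rbar⁻¹ (β0 n) (Y n i ω)) ^ 2 ∂(P n) ≤
      (K + 1) * (∑ i, X n i * (X n i)ᵀ).trace := fun n => by
    nlinarith [integral_vnorm_sq_sum_Scluster_le (X n) Rbar⁻¹ (β0 n) (hmeas n) (hbin n)
      (hindep n) (hmean n) hb1 hb2 (hA2 n), htrace_nonneg n]
  refine ⟨⟨K + 1, by positivity, hmoment⟩, ⟨m * C0 ^ 2 + 1, by positivity, htrace⟩, ?_⟩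
  refine isBigOP_of_integral_sq_le (K := (K + 1) * (m * C0 ^ 2 + 1)) (by positivity)
    (fun n => Real.sqrt_nonneg _) (fun n => integrable_vnorm_sq_sum fun i =>
      memLp_Scluster_apply (X n i) Rbar⁻¹ (β0 n) (hmeas n i) (hbin n i) hb1 hb2 (hA2 n i))
    fun n => ?_
  rw [Real.sq_sqrt (by positivity), mul_assoc]
  exact (hmoment n).trans (mul_le_mul_of_nonneg_left (htrace n) (by positivity))

/-- second-moment bound for the ideal estimating function:
E‖S̄_n(β₀)‖² ≤ C·Tr(Σᵢ Xᵢ Xᵢᵀ) = O(n p_n), hence ‖S̄_n(β₀)‖ = O_p(√(n p_n)). -/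
theorem gee_Sbar_second_moment
    (m : ℕ) (hm : 0 < m) (p : ℕ → ℕ) (hp : ∀ n, 0 < p n)
    (Ω : ℕ → Type) [∀ n, MeasurableSpace (Ω n)]
    (P : ∀ n, Measure (Ω n)) [∀ n, IsProbabilityMeasure (P n)]
    (X : ∀ n, Fin n → Matrix (Fin m) (Fin (p n)) ℝ)
    (Y : ∀ n, Fin n → Ω n → Fin m → ℝ)
    (β0 : ∀ n, Fin (p n) → ℝ)
    (hmeas : ∀ n i, Measurable (Y n i))
    (hbin : ∀ n i ω j, Y n i ω j = 0 ∨ Y n i ω j = 1)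
    (hindep : ∀ n, iIndepFun (fun i => Y n i) (P n))
    (hmean : ∀ n (i : Fin n) j, ∫ ω, Y n i ω j ∂(P n) = piv (X n i) (β0 n) j)
    (R0 : Matrix (Fin m) (Fin m) ℝ) (hR0 : R0.PosDef)
    (hcorr : ∀ n (i : Fin n) j j',
      ∫ ω, eps (X n i) (β0 n) (Y n i ω) j * eps (X n i) (β0 n) (Y n i ω) j' ∂(P n) = R0 j j')
    (hA1 : ∃ C : ℝ, ∀ n (i : Fin n) j, vnorm (X n i j) ≤ C * Real.sqrt (p n))
    (b1 b2 : ℝ) (hb1 : 0 < b1) (hb2 : b2 < 1)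
    (hA2 : ∀ n (i : Fin n) j, b1 ≤ piv (X n i) (β0 n) j ∧ piv (X n i) (β0 n) j ≤ b2)
    (hA2c : ∀ n, ∃ B : Set (Fin (p n) → ℝ), IsCompact B ∧ β0 n ∈ interior B)
    (b3 b4 : ℝ) (hb3 : 0 < b3)
    (hA3 : ∀ n, 0 < n → ∀ v : Fin (p n) → ℝ,
      b3 * (∑ k, v k ^ 2) ≤ (n : ℝ)⁻¹ * (v ⬝ᵥ (∑ i, (X n i)ᵀ * X n i).mulVec v) ∧
      (n : ℝ)⁻¹ * (v ⬝ᵥ (∑ i, (X n i)ᵀ * X n i).mulVec v) ≤ b4 * (∑ k, v k ^ 2))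
    (Rbar : Matrix (Fin m) (Fin m) ℝ) (hRbar : Rbar.PosDef) :
    (∃ C : ℝ, 0 < C ∧ ∀ n,
        ∫ ω, vnorm (∑ i, Scluster (X n i) Rbar⁻¹ (β0 n) (Y n i ω)) ^ 2 ∂(P n) ≤
          C * (∑ i, X n i * (X n i)ᵀ).trace) ∧
    (∃ C' : ℝ, 0 < C' ∧ ∀ n,
        (∑ i : Fin n, X n i * (X n i)ᵀ).trace ≤ C' * (n * p n)) ∧
    IsBigOP P (fun n ω => vnorm (∑ i, Scluster (X n i) Rbar⁻¹ (β0 n) (Y n i ω)))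
      (fun n => Real.sqrt ((n : ℝ) * p n)) :=
  gee_Sbar_second_moment_general m p Ω P X Y β0 hmeas hbin hindep hmean hA1 b1 b2 hb1 hb2 hA2 Rbar
end
end
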